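/- Let q ≥ 1 and n₁,…,n_q be positive integers, and let P be the polynomial ring over 𝔽₂ = ℤ/2 in the indeterminates β_i^{(p)} for 1 ≤ p ≤ q and 1 ≤ i ≤ ⌊n_p/2⌋. With the conventions β_0^{(p)} := 1, β_i^{(p)} := β_{n_p−i}^{(p)} for ⌊n_p/2⌋ < i ≤ n_p, and β_i^{(p)} := 0 for i < 0 or i > n_p, define μ_m := Σ_{a₁+⋯+a_q = m} β_{a₁}^{(1)}⋯β_{a_q}^{(q)} and μ̃_m := μ_m + (binom(n₁+⋯+n_q, m) mod 2). Set h := ⌊n₁/2⌋ + ⋯ + ⌊n_q/2⌋ and N := n₁ + ⋯ + n_q. Then for every m with h < m ≤ ⌊N/2⌋, the element μ_m is an 𝔽₂-linear combination of μ₀, μ₁,…, μ_h, and μ̃_m is an 𝔽₂-linear combination of μ̃₁,…, μ̃_h. -/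

import Mathlib

open MvPolynomial

/-- A sequence (given as a list) `a₁, …, aₙ` in a commutative ring `A` is `A`-regular if for
each `i`, `aᵢ` is not a zero divisor on `A ⧸ (a₁, …, a_{i-1})`. -/
def IsRegularSeq {A : Type*} [CommRing A] (l : List A) : Prop :=
  ∀ (i : ℕ) (h : i < l.length), ∀ x : A,
    l.get ⟨i, h⟩ * x ∈ Ideal.span {y | y ∈ l.take i} →
      x ∈ Ideal.span {y | y ∈ l.take i}

/-- The element `β_i^{(p)}` of the polynomial ring `P` over `𝔽₂` in the indeterminates
`β_i^{(p)}`, `1 ≤ p ≤ q`, `1 ≤ i ≤ ⌊n_p/2⌋`, with the conventions `β_0^{(p)} = 1`,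
`β_i^{(p)} = β_{n_p−i}^{(p)}` for `⌊n_p/2⌋ < i ≤ n_p`, and `β_i^{(p)} = 0` for `i > n_p`. -/
noncomputable def bb (q : ℕ) (n : Fin q → ℕ) (p : Fin q) (i : ℕ) :
    MvPolynomial (Σ p : Fin q, Fin (n p / 2)) (ZMod 2) :=
  if h : i ≤ n p then
    (if h1 : 1 ≤ min i (n p - i) then X ⟨p, ⟨min i (n p - i) - 1, by omega⟩⟩ else 1)
  else 0

/-- `μ_m := Σ_{a₁+⋯+a_q = m} β_{a₁}^{(1)} ⋯ β_{a_q}^{(q)}`. -/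
noncomputable def muP (q : ℕ) (n : Fin q → ℕ) (m : ℕ) :
    MvPolynomial (Σ p : Fin q, Fin (n p / 2)) (ZMod 2) :=
  ∑ a ∈ (Fintype.piFinset fun _ : Fin q => Finset.range (m + 1)).filter
      (fun a => ∑ p, a p = m),
    ∏ p, bb q n p (a p)

/-- `μ̃_m := μ_m + (binom(n₁+⋯+n_q, m) mod 2)`. -/
noncomputable def muTildeP (q : ℕ) (n : Fin q → ℕ) (m : ℕ) :
    MvPolynomial (Σ p : Fin q, Fin (n p / 2)) (ZMod 2) :=
  muP q n m + (Nat.choose (∑ p, n p) m : MvPolynomial (Σ p : Fin q, Fin (n p / 2)) (ZMod 2))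

/-!
Put `f_p = ∑ⱼ β_j^{(p)} Yʲ`, so that `μ_m` is the coefficient of `Yᵐ` in `F = ∏_p f_p`. Each `f_p`
is palindromic of degree `n_p`, and palindromic polynomials of degree `n` are spanned by
`Yᵏ (1 + Y)^(n - 2k)`, `k ≤ n/2`; multiplying, `F = ∑_{K ≤ h} l_K Y^K (1 + Y)^(N - 2K)`.
The coefficient of `Yʲ` in `Y^K (1 + Y)^(N - 2K)` is the integer `binom(N - 2K, j - K)`, which is
`1` for `j = K` and `0` for `j < K`. So the first `h + 1` coefficients of `F` determine the `l_K`
through a unitriangular integer system, and every coefficient of `F` is an integral combination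
of `μ₀, …, μ_h`. For `μ̃` the same applies to `F + (1 + Y)^N`, whose constant coefficient `μ₀ + 1`
vanishes in characteristic `2`.
-/

namespace Polynomial

section CommSemiring

variable {R : Type*} [CommSemiring R]

lemma coeff_prod_eq_sum_piAntidiag {ι : Type*} [DecidableEq ι] (s : Finset ι) (f : ι → R[X])
    (d : ℕ) : (∏ i ∈ s, f i).coeff d = ∑ a ∈ s.piAntidiag d, ∏ i ∈ s, (f i).coeff (a i) := by
  rw [← coeff_coe, ← coeToPowerSeries.ringHom_apply, map_prod, PowerSeries.coeff_prod,
    Finset.finsuppAntidiag, Finset.sum_map]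
  simp only [coeToPowerSeries.ringHom_apply, coeff_coe]
  exact Finset.sum_attach _ (fun a : ι → ℕ => ∏ i ∈ s, (f i).coeff (a i))

noncomputable def palindromicBasis (n k : ℕ) : R[X] := X ^ k * (1 + X) ^ (n - 2 * k)

lemma coeff_palindromicBasis (n k j : ℕ) :
    (palindromicBasis n k : R[X]).coeff j =
      if k ≤ j then ((n - 2 * k).choose (j - k) : R) else 0 := by
  rw [palindromicBasis, coeff_X_pow_mul', coeff_one_add_X_pow]

lemma palindromicBasis_add_two_add_one (n k : ℕ) :
    (palindromicBasis (n + 2) (k + 1) : R[X]) = X * palindromicBasis n k := by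
  rw [palindromicBasis, palindromicBasis, show n + 2 - 2 * (k + 1) = n - 2 * k by omega]
  ring

lemma X_mul_mem_span_palindromicBasis {n b : ℕ} {f : R[X]}
    (hf : f ∈ Submodule.span R (palindromicBasis n '' Set.Iic b)) :
    X * f ∈ Submodule.span R (palindromicBasis (n + 2) '' Set.Iic (b + 1)) := by
  refine (Submodule.span_le (p := (Submodule.span R _).comap (LinearMap.mulLeft R X))).2 ?_ hf
  rintro _ ⟨k, hk, rfl⟩
  exact Submodule.subset_span ⟨k + 1, by simpa using hk, palindromicBasis_add_two_add_one n k⟩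

lemma mul_mem_span_palindromicBasis {a a' b b' : ℕ} (hb : 2 * b ≤ a) (hb' : 2 * b' ≤ a')
    {f g : R[X]} (hf : f ∈ Submodule.span R (palindromicBasis a '' Set.Iic b))
    (hg : g ∈ Submodule.span R (palindromicBasis a' '' Set.Iic b')) :
    f * g ∈ Submodule.span R (palindromicBasis (a + a') '' Set.Iic (b + b')) := by
  have hfg := Submodule.mul_mem_mul hf hg
  rw [Submodule.span_mul_span] at hfg
  refine Submodule.span_le.2 ?_ hfg
  rintro _ ⟨_, ⟨k, hk, rfl⟩, _, ⟨k', hk', rfl⟩, rfl⟩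
  simp only [Set.mem_Iic] at hk hk'
  refine Submodule.subset_span ⟨k + k', Set.mem_Iic.2 (add_le_add hk hk'), ?_⟩
  rw [palindromicBasis, palindromicBasis, palindromicBasis,
    show a + a' - 2 * (k + k') = (a - 2 * k) + (a' - 2 * k') by omega, pow_add, pow_add]
  ring

lemma prod_mem_span_palindromicBasis {ι : Type*} (s : Finset ι) {f : ι → R[X]} {a b : ι → ℕ}
    (hb : ∀ i ∈ s, 2 * b i ≤ a i)
    (hf : ∀ i ∈ s, f i ∈ Submodule.span R (palindromicBasis (a i) '' Set.Iic (b i))) :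
    ∏ i ∈ s, f i ∈
      Submodule.span R (palindromicBasis (∑ i ∈ s, a i) '' Set.Iic (∑ i ∈ s, b i)) := by
  classical
  induction s using Finset.induction_on with
  | empty => exact Submodule.subset_span ⟨0, by simp, by simp [palindromicBasis]⟩
  | insert i s hi ih =>
    simp only [Finset.mem_insert, forall_eq_or_imp] at hb hf
    rw [Finset.prod_insert hi, Finset.sum_insert hi, Finset.sum_insert hi]
    have hsum : 2 * ∑ j ∈ s, b j ≤ ∑ j ∈ s, a j := by
      rw [Finset.mul_sum]
      exact Finset.sum_le_sum hb.2
    exact mul_mem_span_palindromicBasis hb.1 hsum hf.1 (ih hb.2 hf.2)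

lemma coeff_eq_zero_of_mem_span_palindromicBasis {n s h j : ℕ} (hj : j < s) {f : R[X]}
    (hf : f ∈ Submodule.span R (palindromicBasis n '' Set.Icc s h)) : f.coeff j = 0 := by
  refine (Submodule.span_le (p := LinearMap.ker (lcoeff R j))).2 ?_ hf
  rintro _ ⟨k, hk, rfl⟩
  simp [coeff_palindromicBasis, show ¬ k ≤ j by grind]

end CommSemiring

section CommRing

variable {R : Type*} [CommRing R]

lemma mem_span_palindromicBasis_of_coeff_symm {n : ℕ} {f : R[X]}
    (hdeg : ∀ j, n < j → f.coeff j = 0) (hsymm : ∀ j ≤ n, f.coeff (n - j) = f.coeff j) :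
    f ∈ Submodule.span R (palindromicBasis n '' Set.Iic (n / 2)) := by
  -- `g` is palindromic without `Y⁰` and `Yⁿ` terms, so `g / Y` is palindromic of degree `n - 2`.
  set g := f - f.coeff 0 • palindromicBasis n 0 with hg
  have hg_coeff (j : ℕ) : g.coeff j = f.coeff j - f.coeff 0 * n.choose j := by
    simp [hg, coeff_palindromicBasis]
  have hg_zero (j : ℕ) (hj : j = 0 ∨ n ≤ j) : g.coeff j = 0 := by
    rw [hg_coeff]
    rcases hj with rfl | hj
    · simp
    obtain rfl | hj := hj.eq_or_lt
    · simp [← hsymm n le_rfl]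
    · simp [hdeg j hj, Nat.choose_eq_zero_of_lt hj]
  have hg_symm (j : ℕ) (hj : j ≤ n) : g.coeff (n - j) = g.coeff j := by
    rw [hg_coeff, hg_coeff, hsymm j hj, Nat.choose_symm hj]
  suffices hg_mem : g ∈ Submodule.span R (palindromicBasis n '' Set.Iic (n / 2)) by
    rw [← add_sub_cancel (f.coeff 0 • palindromicBasis n 0) f]
    exact add_mem (Submodule.smul_mem _ _ (Submodule.subset_span ⟨0, by simp, rfl⟩)) hg_mem
  obtain hn | ⟨n, rfl⟩ : n < 2 ∨ ∃ n', n = n' + 2 := by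
    rcases n with _ | _ | n <;> simp
  · rw [show g = 0 by ext j; simpa using hg_zero j (by omega)]
    exact zero_mem _
  · have hdivX : g.divX ∈ Submodule.span R (palindromicBasis n '' Set.Iic (n / 2)) := by
      refine mem_span_palindromicBasis_of_coeff_symm (fun j hj => ?_) (fun j hj => ?_)
      · simpa [coeff_divX] using hg_zero (j + 1) (by omega)
      · rw [coeff_divX, coeff_divX, ← hg_symm (j + 1) (by omega)]
        congr 1
        omega
    have hX : X * g.divX = g := by simpa [hg_zero 0 (by simp)] using X_mul_divX_add g
    rw [← hX, show (n + 2) / 2 = n / 2 + 1 by omega]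
    exact X_mul_mem_span_palindromicBasis hdivX
termination_by n

lemma coeff_mem_span_coeff_of_mem_span_palindromicBasis (k : Type*) [Ring k] [Module k R]
    {n s h : ℕ} {f : R[X]} (hf : f ∈ Submodule.span R (palindromicBasis n '' Set.Icc s h))
    (m : ℕ) : f.coeff m ∈ Submodule.span k (f.coeff '' Set.Icc s h) := by
  rcases lt_or_ge h s with hhs | hsh
  · rw [Set.Icc_eq_empty (by omega), Set.image_empty, Submodule.span_empty,
      Submodule.mem_bot] at hf
    simp [hf]
  rw [← Set.insert_Icc_succ_left_eq_Icc hsh, Set.image_insert_eq, Submodule.mem_span_insert,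
    Order.succ_eq_add_one] at hf
  -- `g` has no `Yˢ` term, so `a` is the coefficient of `Yˢ` in `a • Yˢ (1 + Y)^(n - 2s) + g`.
  obtain ⟨a, g, hg, rfl⟩ := hf
  set c : ℕ → ℕ := fun j => if s ≤ j then (n - 2 * s).choose (j - s) else 0
  have hcoeff (j : ℕ) : (a • palindromicBasis n s + g).coeff j = c j • a + g.coeff j := by
    simp only [c, coeff_add, coeff_smul, coeff_palindromicBasis, smul_eq_mul]
    split_ifs <;> simp [mul_comm]
  have hcoeff_s : (a • palindromicBasis n s + g).coeff s = a := by
    simp [hcoeff, c, coeff_eq_zero_of_mem_span_palindromicBasis (Nat.lt_succ_self s) hg]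
  set T := Submodule.span k ((a • palindromicBasis n s + g).coeff '' Set.Icc s h)
  have ha : a ∈ T := hcoeff_s ▸ Submodule.subset_span ⟨s, ⟨le_rfl, hsh⟩, rfl⟩
  have hg_le : Submodule.span k (g.coeff '' Set.Icc (s + 1) h) ≤ T := by
    rw [Submodule.span_le]
    rintro _ ⟨j, hj, rfl⟩
    rw [show g.coeff j = (a • palindromicBasis n s + g).coeff j - c j • a by rw [hcoeff]; abel]
    exact sub_mem (Submodule.subset_span ⟨j, ⟨by grind, hj.2⟩, rfl⟩) (nsmul_mem ha _)
  rw [hcoeff m]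
  exact add_mem (nsmul_mem ha _)
    (hg_le (coeff_mem_span_coeff_of_mem_span_palindromicBasis k hg m))
termination_by h + 1 - s

end CommRing

end Polynomial

open Polynomial

variable {q : ℕ} {n : Fin q → ℕ}

lemma bb_zero (p : Fin q) : bb q n p 0 = 1 := by
  simp [bb]

lemma bb_of_lt (p : Fin q) {i : ℕ} (hi : n p < i) : bb q n p i = 0 := by
  simp [bb, show ¬ i ≤ n p by omega]

lemma bb_symm (p : Fin q) {i : ℕ} (hi : i ≤ n p) : bb q n p (n p - i) = bb q n p i := by
  simp only [bb, dif_pos hi, dif_pos (Nat.sub_le _ _), Nat.sub_sub_self hi, min_comm]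

noncomputable def betaPoly (q : ℕ) (n : Fin q → ℕ) (p : Fin q) :
    (MvPolynomial (Σ p : Fin q, Fin (n p / 2)) (ZMod 2))[X] :=
  ∑ j ∈ Finset.range (n p + 1), Polynomial.monomial j (bb q n p j)

lemma coeff_betaPoly (p : Fin q) (j : ℕ) : (betaPoly q n p).coeff j = bb q n p j := by
  simp only [betaPoly, finsetSum_coeff, Polynomial.coeff_monomial, Finset.sum_ite_eq',
    Finset.mem_range]
  split_ifs with hj
  · rfl
  · exact (bb_of_lt p (by omega)).symm

lemma betaPoly_mem_span (p : Fin q) :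
    betaPoly q n p ∈ Submodule.span (MvPolynomial (Σ p : Fin q, Fin (n p / 2)) (ZMod 2))
      (palindromicBasis (n p) '' Set.Iic (n p / 2)) :=
  mem_span_palindromicBasis_of_coeff_symm (fun j hj => by rw [coeff_betaPoly, bb_of_lt p hj])
    (fun j hj => by rw [coeff_betaPoly, coeff_betaPoly, bb_symm p hj])

lemma muP_eq_coeff_prod (m : ℕ) : muP q n m = (∏ p, betaPoly q n p).coeff m := by
  classical
  rw [coeff_prod_eq_sum_piAntidiag, muP]
  refine Finset.sum_congr ?_ fun a _ => by simp only [coeff_betaPoly]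
  ext a
  simp only [Finset.mem_filter, Fintype.mem_piFinset, Finset.mem_range, Finset.mem_piAntidiag,
    Finset.mem_univ, implies_true, and_true, and_iff_right_iff_imp]
  rintro rfl p
  exact Nat.lt_succ_of_le (Finset.single_le_sum (fun _ _ => Nat.zero_le _) (Finset.mem_univ p))

lemma muP_zero : muP q n 0 = 1 := by
  simp [muP_eq_coeff_prod, coeff_zero_prod, coeff_betaPoly, bb_zero]

lemma muTildeP_eq_coeff (m : ℕ) :
    muTildeP q n m = (∏ p, betaPoly q n p + (1 + Polynomial.X) ^ ∑ p, n p).coeff m := by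
  rw [muTildeP, muP_eq_coeff_prod, Polynomial.coeff_add, coeff_one_add_X_pow]

lemma prod_betaPoly_mem_span :
    ∏ p, betaPoly q n p ∈ Submodule.span (MvPolynomial (Σ p : Fin q, Fin (n p / 2)) (ZMod 2))
      (palindromicBasis (∑ p, n p) '' Set.Icc 0 (∑ p, n p / 2)) := by
  rw [show Set.Icc 0 (∑ p, n p / 2) = Set.Iic (∑ p, n p / 2) by ext; simp]
  exact prod_mem_span_palindromicBasis _ (fun p _ => Nat.mul_div_le (n p) 2)
    (fun p _ => betaPoly_mem_span p)

lemma muP_mem_span (m : ℕ) :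
    muP q n m ∈ Submodule.span (ZMod 2) (muP q n '' Set.Icc 0 (∑ p, n p / 2)) := by
  simpa only [← funext muP_eq_coeff_prod] using
    coeff_mem_span_coeff_of_mem_span_palindromicBasis (ZMod 2) prod_betaPoly_mem_span m

lemma muTildeP_mem_span (m : ℕ) :
    muTildeP q n m ∈ Submodule.span (ZMod 2) (muTildeP q n '' Set.Icc 1 (∑ p, n p / 2)) := by
  have hmem : ∏ p, betaPoly q n p + (1 + Polynomial.X) ^ ∑ p, n p ∈ Submodule.span _
      (palindromicBasis (∑ p, n p) '' Set.Icc 0 (∑ p, n p / 2)) :=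
    add_mem prod_betaPoly_mem_span (Submodule.subset_span ⟨0, by simp, by simp [palindromicBasis]⟩)
  have hcoeff_zero : (∏ p, betaPoly q n p + (1 + Polynomial.X) ^ ∑ p, n p).coeff 0 = 0 := by
    rw [← muTildeP_eq_coeff, muTildeP, muP_zero, Nat.choose_zero_right, Nat.cast_one,
      CharTwo.add_self_eq_zero]
  have hspan := coeff_mem_span_coeff_of_mem_span_palindromicBasis (ZMod 2) hmem m
  rwa [← Set.insert_Icc_succ_left_eq_Icc (Nat.zero_le _), Set.image_insert_eq, hcoeff_zero,
    Submodule.span_insert_zero, ← funext muTildeP_eq_coeff, Order.succ_eq_add_one,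
    zero_add] at hspan

theorem stmt_11 (q : ℕ) (n : Fin q → ℕ) (m : ℕ) :
    muP q n m ∈
      Submodule.span (ZMod 2) {x | ∃ i, i ≤ ∑ p, n p / 2 ∧ x = muP q n i} ∧
    muTildeP q n m ∈
      Submodule.span (ZMod 2) {x | ∃ i, 1 ≤ i ∧ i ≤ ∑ p, n p / 2 ∧ x = muTildeP q n i} := by
  constructor
  · simpa [Set.image, eq_comm] using muP_mem_span m
  · simpa [Set.image, eq_comm, and_assoc] using muTildeP_mem_span m
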